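/- For matrices K, U, V of compatible sizes, vec((K ∘ (U Vᴴ)) V) = (Vᵀ ⊗ I) diag(vec K) (conj(V) ⊗ I) vec(U). -/

import Mathlib

open Matrix Kronecker

/-- Column-wise vectorization of a matrix: `vec M (j, i) = M i j`. -/
def vec {k m : ℕ} (M : Matrix (Fin k) (Fin m) ℂ) : Fin m × Fin k → ℂ :=
  fun p => M p.2 p.1

theorem vec_eq_matrix_vec {k m : ℕ} (M : Matrix (Fin k) (Fin m) ℂ) :
    _root_.vec M = Matrix.vec M :=
  rfl

namespace Matrix

variable {l m n : Type*} {R : Type*}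

theorem vec_mul_eq_kronecker_mulVec [CommSemiring R] [Fintype l] [Fintype m] [DecidableEq l]
    (X : Matrix l m R) (B : Matrix m n R) :
    vec (X * B) = (Bᵀ ⊗ₖ (1 : Matrix l l R)) *ᵥ vec X := by
  rw [kronecker_mulVec_vec, Matrix.one_mul, transpose_transpose]

theorem vec_hadamard_eq_diagonal_mulVec [NonUnitalNonAssocSemiring R] [Fintype m] [Fintype n]
    [DecidableEq m] [DecidableEq n] (A B : Matrix m n R) :
    vec (A ⊙ B) = diagonal (vec A) *ᵥ vec B := by
  ext i
  rw [vec_hadamard, Pi.mul_apply, mulVec_diagonal]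

end Matrix

/-- vec((K ∘ (U Vᴴ)) V) = (Vᵀ ⊗ I) diag(vec K) (conj(V) ⊗ I) vec(U). -/
theorem vec_hadamard_mul_right (n r : ℕ) (K : Matrix (Fin n) (Fin n) ℂ)
    (U V : Matrix (Fin n) (Fin r) ℂ) :
    _root_.vec (Matrix.hadamard K (U * Vᴴ) * V) =
      (Vᵀ ⊗ₖ (1 : Matrix (Fin n) (Fin n) ℂ)) *ᵥ
        (Matrix.diagonal (_root_.vec K) *ᵥ
          ((Vᴴᵀ ⊗ₖ (1 : Matrix (Fin n) (Fin n) ℂ)) *ᵥ _root_.vec U)) := by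
  simp only [vec_eq_matrix_vec]
  rw [vec_mul_eq_kronecker_mulVec, vec_hadamard_eq_diagonal_mulVec, vec_mul_eq_kronecker_mulVec]
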